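/- The proportion of monic polynomials of degree d ≥ 2 in (ℤ/p^k)[x] that are separable is 1 - 1/p; that is, the number of separable monic polynomials of degree d equals (1 - p^{-1}) · p^{kd}. -/

import Mathlib

/-!
Reduction `φ : ℤ/p^k → 𝔽_p` is surjective with nilpotent kernel, so a Bézout identity
`a f + b f' = 1` mod `p` lifts to one with a unit right-hand side: `f` is separable iff `φ f` is,
i.e. iff `φ f` is squarefree. On coefficient vectors `φ` is a surjective additive map whose fibres
all have `p^((k-1)d)` elements, so the count is `p^((k-1)d)` times the number `s_d` of squarefree
monic polynomials of degree `d` over `𝔽_p`.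

Over `𝔽_q` every monic `f` is uniquely `g h²` with `g` squarefree and `h` monic. Among these pairs
of total degree `n + 2`, those with `h = 1` give `s_(n+2)`, and `h ↦ (h(0), h div X)` matches the
others with `𝔽_q ×` (pairs of total degree `n`); hence `q^(n+2) = s_(n+2) + q·q^n`, and
`s_d = q^d - q^(d-1)`.
-/

open Polynomial Function

theorem AddMonoidHom.card_preimage_of_surjective {G H : Type*} [AddGroup G] [AddGroup H]
    (f : G →+ H) (hf : Surjective f) (s : Set H) :
    Nat.card (f ⁻¹' s) = Nat.card f.ker * Nat.card s := by
  let e := QuotientAddGroup.quotientKerEquivOfSurjective f hf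
  have hpre : f ⁻¹' s = QuotientAddGroup.mk ⁻¹' (e ⁻¹' s) := rfl
  rw [hpre, Nat.card_congr (QuotientAddGroup.preimageMkEquivAddSubgroupProdSet _ _),
    Nat.card_prod, Nat.card_preimage_of_injective e.injective (by simp [e.surjective.range_eq])]

theorem IsCoprime.of_map_of_ker_le_nilradical {A B : Type*} [CommRing A] [CommRing B]
    (ψ : A →+* B) (hψ : Surjective ψ) (hker : RingHom.ker ψ ≤ nilradical A) {x y : A}
    (h : IsCoprime (ψ x) (ψ y)) : IsCoprime x y := by
  obtain ⟨a', b', hab⟩ := h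
  obtain ⟨a, rfl⟩ := hψ a'
  obtain ⟨b, rfl⟩ := hψ b'
  have hnil : IsNilpotent (a * x + b * y - 1) :=
    hker (by simp only [RingHom.mem_ker, map_sub, map_add, map_mul, hab, map_one, sub_self])
  obtain ⟨u, hu⟩ := by simpa using hnil.isUnit_add_one
  exact ⟨↑u⁻¹ * a, ↑u⁻¹ * b, by rw [mul_assoc, mul_assoc, ← mul_add, ← hu, Units.inv_mul]⟩

theorem ZMod.ker_castHom_le_nilradical (p : ℕ) {k : ℕ} (hk : k ≠ 0) :
    RingHom.ker (ZMod.castHom (dvd_pow_self p hk) (ZMod p)) ≤ nilradical (ZMod (p ^ k)) := by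
  intro x hx
  obtain ⟨a, rfl⟩ := ZMod.intCast_surjective x
  rw [RingHom.mem_ker, map_intCast, ZMod.intCast_zmod_eq_zero_iff_dvd] at hx
  obtain ⟨b, rfl⟩ := hx
  exact mem_nilradical.mpr
    ⟨k, by push_cast; rw [mul_pow, ← Nat.cast_pow, ZMod.natCast_self, zero_mul]⟩

section SquarefreeMulSq

variable {R : Type*} [CommMonoidWithZero R] [UniqueFactorizationMonoid R]

theorem exists_squarefree_mul_sq {x : R} (hx : x ≠ 0) :
    ∃ y z : R, Squarefree y ∧ y * z ^ 2 = x := by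
  induction x using WfDvdMonoid.induction_on_irreducible with
  | zero => contradiction
  | unit u hu => exact ⟨u, 1, hu.squarefree, by simp⟩
  | mul w p hw hp ih =>
    obtain ⟨y, z, hy, rfl⟩ := ih hw
    by_cases hpy : p ∣ y
    · obtain ⟨y', rfl⟩ := hpy
      exact ⟨y', p * z, hy.of_mul_right, by simp only [sq]; ac_rfl⟩
    · refine ⟨p * y, z, ?_, mul_assoc _ _ _⟩
      exact squarefree_mul_iff.mpr ⟨hp.isRelPrime_iff_not_dvd.mpr hpy, hp.squarefree, hy⟩

open UniqueFactorizationMonoid in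
theorem associated_of_squarefree_mul_sq_eq {y₁ z₁ y₂ z₂ : R} (hy₁ : Squarefree y₁)
    (hy₂ : Squarefree y₂) (h0 : y₁ * z₁ ^ 2 ≠ 0) (h : y₁ * z₁ ^ 2 = y₂ * z₂ ^ 2) :
    Associated z₁ z₂ := by
  classical
  obtain ⟨_⟩ : Nonempty (NormalizationMonoid R) := inferInstance
  obtain ⟨hy₁0, hz₁0⟩ := mul_ne_zero_iff.mp h0
  obtain ⟨hy₂0, hz₂0⟩ := mul_ne_zero_iff.mp (h ▸ h0)
  have hfactors := congrArg normalizedFactors h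
  rw [normalizedFactors_mul hy₁0 hz₁0, normalizedFactors_mul hy₂0 hz₂0, normalizedFactors_pow,
    normalizedFactors_pow] at hfactors
  rw [associated_iff_normalizedFactors_eq_normalizedFactors (pow_ne_zero_iff two_ne_zero |>.mp hz₁0)
    (pow_ne_zero_iff two_ne_zero |>.mp hz₂0)]
  ext a
  -- Counts in the squarefree `y₁, y₂` are `0` or `1`, so `c(y) + 2 c(z)` determines `c(z)`.
  have hcount := congrArg (Multiset.count a) hfactors
  have h₁ := Multiset.nodup_iff_count_le_one.mp
    ((squarefree_iff_nodup_normalizedFactors hy₁0).mp hy₁) a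
  have h₂ := Multiset.nodup_iff_count_le_one.mp
    ((squarefree_iff_nodup_normalizedFactors hy₂0).mp hy₂) a
  simp only [Multiset.count_add, Multiset.count_nsmul] at hcount
  omega

end SquarefreeMulSq

namespace Polynomial

variable {R S : Type*} [CommRing R] [CommRing S]

theorem Separable.of_map_of_ker_le_nilradical {φ : R →+* S} (hφ : Surjective φ)
    (hker : RingHom.ker φ ≤ nilradical R) {f : R[X]} (h : (f.map φ).Separable) :
    f.Separable := by
  rw [Separable, derivative_map] at h
  refine IsCoprime.of_map_of_ker_le_nilradical (mapRingHom φ) (map_surjective φ hφ) ?_ h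
  rw [ker_mapRingHom, Ideal.map_le_iff_le_comap]
  exact fun x hx => isNilpotent_C_iff.mpr (hker hx)

variable (R) in
noncomputable def monicEquivFun [Nontrivial R] (n : ℕ) :
    {f : R[X] // f.Monic ∧ f.natDegree = n} ≃ (Fin n → R) :=
  (monicEquivDegreeLT n).trans (degreeLTEquiv R n).toEquiv

theorem map_monicEquivFun_symm [Nontrivial R] [Nontrivial S] (φ : R →+* S) {n : ℕ}
    (c : Fin n → R) :
    ((monicEquivFun R n).symm c).1.map φ = ((monicEquivFun S n).symm (φ ∘ c)).1 := by
  simp [monicEquivFun, monicEquivDegreeLT, degreeLTEquiv, Polynomial.map_sum]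

variable (R) in
theorem card_monic_subtype [Nontrivial R] (n : ℕ) (P : R[X] → Prop) :
    Nat.card {f : R[X] // f.Monic ∧ f.natDegree = n ∧ P f}
      = Nat.card {c : Fin n → R // P ((monicEquivFun R n).symm c).1} := by
  refine Nat.card_congr ((Equiv.subtypeEquivRight fun f => ?_).trans
    ((Equiv.subtypeSubtypeEquivSubtypeExists _ (fun f => P f.1)).symm.trans
      (Equiv.subtypeEquiv (monicEquivFun R n) fun f => ?_)))
  · simp only [exists_prop, and_assoc]
  · simp

variable (R) in
theorem card_monic [Nontrivial R] (n : ℕ) :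
    Nat.card {f : R[X] // f.Monic ∧ f.natDegree = n} = Nat.card R ^ n := by
  rw [Nat.card_congr (monicEquivFun R n), Nat.card_fun, Nat.card_fin]

theorem card_monic_map_mul_card_pow [Nontrivial S] (φ : R →+* S) (hφ : Surjective φ) (n : ℕ)
    (P : S[X] → Prop) :
    Nat.card {f : R[X] // f.Monic ∧ f.natDegree = n ∧ P (f.map φ)} * Nat.card S ^ n
      = Nat.card {g : S[X] // g.Monic ∧ g.natDegree = n ∧ P g} * Nat.card R ^ n := by
  have := φ.domain_nontrivial
  let ψ : (Fin n → R) →+ (Fin n → S) := (φ : R →+ S).compLeft (Fin n)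
  have hψ : Surjective ψ := hφ.comp_left
  have hcard_ker : Nat.card ψ.ker * Nat.card S ^ n = Nat.card R ^ n := by
    simpa [Nat.card_fun] using (ψ.card_preimage_of_surjective hψ Set.univ).symm
  rw [card_monic_subtype, card_monic_subtype]
  simp only [map_monicEquivFun_symm]
  rw [← hcard_ker, ← mul_assoc, mul_comm _ (Nat.card ψ.ker)]
  exact congrArg (· * _) (ψ.card_preimage_of_surjective hψ {c | P ((monicEquivFun S n).symm c).1})

theorem Monic.mul_X_add_C [Nontrivial R] {h : R[X]} (hh : h.Monic) (c : R) :
    (h * X + C c).Monic :=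
  (hh.mul monic_X).add_of_left <| degree_C_lt.trans_le <| by
    rw [degree_mul_X]
    exact le_add_of_nonneg_left (zero_le_degree_iff.mpr hh.ne_zero)

theorem Monic.natDegree_mul_X_add_C [Nontrivial R] {h : R[X]} (hh : h.Monic) (c : R) :
    (h * X + C c).natDegree = h.natDegree + 1 := by
  rw [natDegree_add_C, natDegree_mul_X hh.ne_zero]

theorem Monic.divX [Nontrivial R] {h : R[X]} (hh : h.Monic) (hd : h.natDegree ≠ 0) :
    h.divX.Monic := by
  rw [Monic.def, Polynomial.leadingCoeff, natDegree_divX_eq_natDegree_tsub_one, coeff_divX,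
    Nat.sub_add_cancel (Nat.pos_of_ne_zero hd)]
  exact hh.coeff_natDegree

theorem divX_mul_X_add_C (h : R[X]) (c : R) : (h * X + C c).divX = h := by
  ext n
  simp [coeff_divX]

section Field

variable {F : Type*} [Field F]

theorem Monic.exists_squarefree_mul_sq {f : F[X]} (hf : f.Monic) :
    ∃ g h : F[X], g.Monic ∧ Squarefree g ∧ h.Monic ∧ g * h ^ 2 = f := by
  obtain ⟨y, z, hy, hyz⟩ := _root_.exists_squarefree_mul_sq hf.ne_zero
  have hz : z ≠ 0 := by rintro rfl; exact hf.ne_zero (by simp [← hyz])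
  have ha : z.leadingCoeff ≠ 0 := leadingCoeff_ne_zero.mpr hz
  have hzm : (z * C z.leadingCoeff⁻¹).Monic := monic_mul_leadingCoeff_inv hz
  have hprod : y * C (z.leadingCoeff ^ 2) * (z * C z.leadingCoeff⁻¹) ^ 2 = f := by
    have hC : C (z.leadingCoeff ^ 2) * C z.leadingCoeff⁻¹ ^ 2 = 1 := by
      rw [← C_pow, ← C_mul, ← mul_pow, mul_inv_cancel₀ ha, one_pow, C_1]
    rw [← hyz]
    linear_combination (y * z ^ 2) * hC
  refine ⟨_, _, (hzm.pow 2).of_mul_monic_right (hprod ▸ hf), ?_, hzm, hprod⟩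
  exact (associated_mul_unit_right y _
    (isUnit_C.mpr (pow_ne_zero 2 ha).isUnit)).squarefree_iff.mp hy

theorem eq_of_squarefree_mul_sq_eq {g₁ h₁ g₂ h₂ : F[X]} (hg₁ : Squarefree g₁)
    (hg₂ : Squarefree g₂) (hh₁ : h₁.Monic) (hh₂ : h₂.Monic) (h : g₁ * h₁ ^ 2 = g₂ * h₂ ^ 2) :
    g₁ = g₂ ∧ h₁ = h₂ := by
  have h0 : g₁ * h₁ ^ 2 ≠ 0 := mul_ne_zero hg₁.ne_zero (pow_ne_zero 2 hh₁.ne_zero)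
  obtain rfl := eq_of_monic_of_associated hh₁ hh₂ (associated_of_squarefree_mul_sq_eq hg₁ hg₂ h0 h)
  exact ⟨mul_right_cancel₀ (pow_ne_zero 2 hh₁.ne_zero) h, rfl⟩

abbrev MonicSqDecomp (F : Type*) [Field F] (n : ℕ) : Type _ :=
  {gh : F[X] × F[X] // gh.1.Monic ∧ Squarefree gh.1 ∧ gh.2.Monic ∧
    gh.1.natDegree + 2 * gh.2.natDegree = n}

noncomputable def monicSqDecompEquiv (n : ℕ) :
    MonicSqDecomp F n ≃ {f : F[X] // f.Monic ∧ f.natDegree = n} := by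
  refine Equiv.ofBijective (fun gh => ⟨gh.1.1 * gh.1.2 ^ 2, gh.2.1.mul (gh.2.2.2.1.pow 2), ?_⟩)
    ⟨?_, ?_⟩
  · rw [gh.2.1.natDegree_mul (gh.2.2.2.1.pow 2), gh.2.2.2.1.natDegree_pow]
    linarith [gh.2.2.2.2]
  · rintro ⟨⟨g₁, h₁⟩, _, hg₁, hh₁, _⟩ ⟨⟨g₂, h₂⟩, _, hg₂, hh₂, _⟩ hprod
    obtain ⟨rfl, rfl⟩ := eq_of_squarefree_mul_sq_eq hg₁ hg₂ hh₁ hh₂ (Subtype.ext_iff.mp hprod)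
    rfl
  · rintro ⟨f, hf, rfl⟩
    obtain ⟨g, h, hg, hgs, hh, rfl⟩ := hf.exists_squarefree_mul_sq
    refine ⟨⟨(g, h), hg, hgs, hh, ?_⟩, rfl⟩
    rw [hg.natDegree_mul (hh.pow 2), hh.natDegree_pow, mul_comm 2]

noncomputable def monicSqDecompNatDegreeZeroEquiv (n : ℕ) :
    {x : MonicSqDecomp F n // x.1.2.natDegree = 0}
      ≃ {f : F[X] // f.Monic ∧ f.natDegree = n ∧ Squarefree f} where
  toFun := fun ⟨⟨(g, _), hg, hgs, _, hd⟩, h0⟩ => ⟨g, hg, by simpa [h0] using hd, hgs⟩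
  invFun := fun ⟨g, hg, hd, hgs⟩ =>
    ⟨⟨(g, 1), hg, hgs, monic_one, by simpa using hd⟩, natDegree_one⟩
  left_inv := by
    rintro ⟨⟨⟨g, h⟩, hg, hgs, hh, hd⟩, h0⟩
    obtain rfl : h = 1 := hh.natDegree_eq_zero.mp h0
    rfl
  right_inv := by rintro ⟨g, hg, hd, hgs⟩; rfl

noncomputable def monicSqDecompNatDegreeNeZeroEquiv (n : ℕ) :
    {x : MonicSqDecomp F (n + 2) // x.1.2.natDegree ≠ 0} ≃ F × MonicSqDecomp F n where
  toFun := fun ⟨⟨(g, h), hg, hgs, hh, hd⟩, h0⟩ =>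
    (h.coeff 0, ⟨(g, h.divX), hg, hgs, hh.divX h0, by
      rw [natDegree_divX_eq_natDegree_tsub_one]; simp only at hd h0 ⊢; omega⟩)
  invFun := fun ⟨c, ⟨(g, h), hg, hgs, hh, hd⟩⟩ =>
    ⟨⟨(g, h * X + C c), hg, hgs, hh.mul_X_add_C c, by
      rw [hh.natDegree_mul_X_add_C]; simp only at hd ⊢; omega⟩, by
      rw [hh.natDegree_mul_X_add_C]; omega⟩
  left_inv := by
    rintro ⟨⟨⟨g, h⟩, hg, hgs, hh, hd⟩, h0⟩
    exact Subtype.ext (Subtype.ext (Prod.ext rfl (divX_mul_X_add h)))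
  right_inv := by
    rintro ⟨c, ⟨⟨g, h⟩, hg, hgs, hh, hd⟩⟩
    exact Prod.ext (by simp) (Subtype.ext (Prod.ext rfl (divX_mul_X_add_C h c)))

variable [Finite F]

instance (n : ℕ) : Finite (MonicSqDecomp F n) :=
  Finite.of_equiv _ ((monicSqDecompEquiv n).trans (monicEquivFun F n)).symm

theorem card_monicSqDecomp_add_two (n : ℕ) :
    Nat.card (MonicSqDecomp F (n + 2))
      = Nat.card {f : F[X] // f.Monic ∧ f.natDegree = n + 2 ∧ Squarefree f}
        + Nat.card F * Nat.card (MonicSqDecomp F n) := by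
  rw [← Nat.card_congr (Equiv.sumCompl fun x : MonicSqDecomp F (n + 2) => x.1.2.natDegree = 0),
    Nat.card_sum, Nat.card_congr (monicSqDecompNatDegreeZeroEquiv _),
    Nat.card_congr (monicSqDecompNatDegreeNeZeroEquiv n), Nat.card_prod]

theorem card_monic_squarefree_add_pow (n : ℕ) :
    Nat.card {f : F[X] // f.Monic ∧ f.natDegree = n + 2 ∧ Squarefree f} + Nat.card F ^ (n + 1)
      = Nat.card F ^ (n + 2) := by
  have h := card_monicSqDecomp_add_two (F := F) n
  rw [Nat.card_congr (monicSqDecompEquiv _), Nat.card_congr (monicSqDecompEquiv _), card_monic,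
    card_monic] at h
  rw [h, pow_succ' _ n]

end Field

end Polynomial

/-- The proportion of monic polynomials of degree `d ≥ 2` over `ℤ/p^k` that are separable
is `1 - 1/p`: the number of separable monic polynomials of degree `d` is `(1 - p⁻¹)·p^(kd)`. -/
theorem proportion_monic_separable_zmod_prime_pow (p k d : ℕ) (hp : p.Prime) (hk : 1 ≤ k)
    (hd : 2 ≤ d) :
    (Nat.card {f : (ZMod (p ^ k))[X] | f.Monic ∧ f.natDegree = d ∧ f.Separable} : ℚ)
      = (1 - (p : ℚ)⁻¹) * (p : ℚ) ^ (k * d) := by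
  have : Fact p.Prime := ⟨hp⟩
  have hk0 : k ≠ 0 := by omega
  let φ := ZMod.castHom (dvd_pow_self p hk0) (ZMod p)
  have hφ : Surjective φ := ZMod.ringHom_surjective φ
  have hsep (f : (ZMod (p ^ k))[X]) : f.Separable ↔ Squarefree (f.map φ) := by
    rw [← PerfectField.separable_iff_squarefree]
    exact ⟨fun h => h.map,
      Separable.of_map_of_ker_le_nilradical hφ (ZMod.ker_castHom_le_nilradical p hk0)⟩
  obtain ⟨n, rfl⟩ : ∃ n, d = n + 2 := ⟨d - 2, by omega⟩
  have hcount := card_monic_map_mul_card_pow φ hφ (n + 2) Squarefree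
  have hsqfree := card_monic_squarefree_add_pow (F := ZMod p) n
  simp only [← hsep, Nat.card_zmod] at hcount hsqfree
  set c := Nat.card {f : (ZMod (p ^ k))[X] // f.Monic ∧ f.natDegree = n + 2 ∧ f.Separable}
  set s := Nat.card {g : (ZMod p)[X] // g.Monic ∧ g.natDegree = n + 2 ∧ Squarefree g}
  rw [← pow_mul, mul_comm k] at hcount
  qify at hcount hsqfree
  have hp0 : (p : ℚ) ≠ 0 := by exact_mod_cast hp.ne_zero
  have hinv : (p : ℚ)⁻¹ * p ^ (n + 2) = p ^ (n + 1) := by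
    rw [pow_succ' _ (n + 1), inv_mul_cancel_left₀ hp0]
  apply mul_right_cancel₀ (pow_ne_zero (n + 2) hp0)
  show (c : ℚ) * _ = _
  linear_combination hcount + (p : ℚ) ^ (k * (n + 2)) * (hsqfree + hinv)
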